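/- For every n ≥ 1, the image of the dual lattice A_n* under h_{A_n} − 1 equals A_n; here A_n* = {v ∈ ℚ^{n+1} : Σᵢ vᵢ = 0 and ⟨v,a⟩ ∈ ℤ for all a ∈ A_n}, where h_{A_n} acts on ℚ^{n+1} by cyclically shifting coordinates. -/

import Mathlib

/-!
`h - 1` kills constants, so on the dual lattice it only sees differences `v (i + 1) - v i`, which
are integers (pair `v` with `e_{i+1} - e_i ∈ A_n`) summing to zero. Conversely, an integer
zero-sum `w` is `m (i + 1) - m i` for the integer partial sums `m` of `w`, and subtracting from `m`
its average gives a zero-sum vector whose pairing with `A_n` is still integral.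
-/

open Finset

theorem sum_sub_comp_add_right {G M : Type*} [AddGroup G] [Fintype G] [AddCommGroup M]
    (v : G → M) (g : G) : ∑ i, (v (i + g) - v i) = 0 := by
  rw [sum_sub_distrib, Fintype.sum_equiv (Equiv.addRight g) (fun i => v (i + g)) v fun _ => rfl,
    sub_self]

theorem exists_int_sub_eq_of_forall_int_pairing {ι : Type*} [Fintype ι] [DecidableEq ι]
    {v : ι → ℚ} (hv : ∀ a : ι → ℤ, ∑ i, a i = 0 → ∃ z : ℤ, ∑ i, v i * (a i : ℚ) = z) (i j : ι) :
    ∃ z : ℤ, v j - v i = z := by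
  obtain ⟨z, hz⟩ := hv (Pi.single j 1 - Pi.single i 1) (by simp [sum_sub_distrib])
  refine ⟨z, ?_⟩
  rw [← hz]
  simp [mul_sub, sum_sub_distrib, Pi.single_apply]

theorem Fin.exists_sub_add_one_eq_of_sum_eq_zero {M : Type*} [AddCommGroup M] {n : ℕ}
    {z : Fin (n + 1) → M} (hz : ∑ i, z i = 0) :
    ∃ m : Fin (n + 1) → M, ∀ i, m (i + 1) - m i = z i := by
  refine ⟨Fin.partialSum (Fin.init z), fun i => ?_⟩
  induction i using Fin.lastCases with
  | last =>
    have hlast : Fin.partialSum (Fin.init z) (Fin.last n) = ∑ i, Fin.init z i := by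
      simp [Fin.partialSum, List.take_of_length_le, List.sum_ofFn]
    rw [Fin.sum_univ_castSucc] at hz
    rw [Fin.last_add_one, Fin.partialSum_zero, hlast, zero_sub, neg_eq_iff_add_eq_zero]
    exact hz
  | cast i =>
    rw [Fin.coeSucc_eq_succ, Fin.partialSum_succ, add_sub_cancel_left, Fin.init]

theorem sum_sub_average_eq_zero {ι K : Type*} [Fintype ι] [Nonempty ι] [Field K] [CharZero K]
    (v : ι → K) : ∑ i, (v i - (∑ j, v j) / Fintype.card ι) = 0 := by
  rw [sum_sub_distrib, sum_const, card_univ, nsmul_eq_mul, mul_div_cancel₀ _ ?_, sub_self]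
  exact_mod_cast Fintype.card_ne_zero

theorem sum_sub_const_mul_of_sum_eq_zero {ι R : Type*} [Fintype ι] [CommRing R]
    (v a : ι → R) (c : R) (ha : ∑ i, a i = 0) : ∑ i, (v i - c) * a i = ∑ i, v i * a i := by
  simp only [sub_mul, sum_sub_distrib, ← mul_sum, ha, mul_zero, sub_zero]

theorem stmt_10_general (n : ℕ) :
    {w : Fin (n + 1) → ℚ | ∃ v : Fin (n + 1) → ℚ,
        ((∑ i, v i) = 0 ∧
          ∀ a : Fin (n + 1) → ℤ, (∑ i, a i) = 0 → ∃ z : ℤ, (∑ i, v i * (a i : ℚ)) = z) ∧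
        w = fun i => v (i + 1) - v i} =
      {w : Fin (n + 1) → ℚ | (∀ i, ∃ z : ℤ, w i = z) ∧ (∑ i, w i) = 0} := by
  ext w
  constructor
  · rintro ⟨v, ⟨-, hv⟩, rfl⟩
    exact ⟨fun i => exists_int_sub_eq_of_forall_int_pairing hv i (i + 1),
      sum_sub_comp_add_right v 1⟩
  · rintro ⟨hw, hsum⟩
    choose z hz using hw
    have hz0 : ∑ i, z i = 0 := by
      simp only [hz] at hsum
      exact_mod_cast hsum
    obtain ⟨m, hm⟩ := Fin.exists_sub_add_one_eq_of_sum_eq_zero hz0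
    set c : ℚ := (∑ j, (m j : ℚ)) / Fintype.card (Fin (n + 1))
    refine ⟨fun j => m j - c, ⟨sum_sub_average_eq_zero _, fun a ha => ⟨∑ j, m j * a j, ?_⟩⟩, ?_⟩
    · rw [sum_sub_const_mul_of_sum_eq_zero _ _ c (by exact_mod_cast ha)]
      push_cast
      rfl
    · funext i
      rw [hz, ← hm]
      push_cast
      ring

/-- For every `n ≥ 1`, the image of the dual lattice
`A_n* = {v ∈ ℚ^{n+1} : Σ vᵢ = 0 and ⟨v,a⟩ ∈ ℤ for all a ∈ A_n}` under `h_{A_n} − 1`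
equals `A_n` (viewed inside `ℚ^{n+1}`), where `h_{A_n}` cyclically shifts coordinates. -/
theorem stmt_10 (n : ℕ) (hn : 1 ≤ n) :
    {w : Fin (n + 1) → ℚ | ∃ v : Fin (n + 1) → ℚ,
        ((∑ i, v i) = 0 ∧
          ∀ a : Fin (n + 1) → ℤ, (∑ i, a i) = 0 → ∃ z : ℤ, (∑ i, v i * (a i : ℚ)) = z) ∧
        w = fun i => v (i + 1) - v i} =
      {w : Fin (n + 1) → ℚ | (∀ i, ∃ z : ℤ, w i = z) ∧ (∑ i, w i) = 0} :=
  stmt_10_general n
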